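/- arXiv:2507.10907 — 2 statements merged into one kernel-verified Lean document; each statement's English description precedes it below -/
import Mathlib

section
/- Every locally compact subgyrogroup H of a topological gyrogroup G is closed in G. -/
universe u

class Gyrogroup (G : Type u) where
  add : G → G → G
  zero : G
  neg : G → G
  gyr : G → G → G → G
  zero_add : ∀ x, add zero x = x
  add_zero : ∀ x, add x zero = x
  neg_add : ∀ x, add (neg x) x = zero
  add_neg : ∀ x, add x (neg x) = zero
  gyr_bij : ∀ x y, Function.Bijective (gyr x y)
  gyr_add : ∀ x y a b, gyr x y (add a b) = add (gyr x y a) (gyr x y b)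
  left_assoc : ∀ x y z, add x (add y z) = add (add x y) (gyr x y z)
  loop : ∀ x y, gyr (add x y) y = gyr x y

namespace Gyrogroup

variable {G : Type u}

instance [Gyrogroup G] : Add G := ⟨Gyrogroup.add⟩
instance [Gyrogroup G] : Zero G := ⟨Gyrogroup.zero⟩
instance [Gyrogroup G] : Neg G := ⟨Gyrogroup.neg⟩

/-- The gyrogroup cooperation `x ⊞ y = x ⊕ gyr[x, ⊖y](y)`. -/
def coadd [Gyrogroup G] (x y : G) : G := x + gyr x (-y) y

/-- `S` is a subgyrogroup: contains the identity and is closed under `⊕`, `⊖` and the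
gyroautomorphisms. -/
def IsSubgyro [Gyrogroup G] (S : Set G) : Prop :=
  (0 : G) ∈ S ∧ (∀ ⦃a b : G⦄, a ∈ S → b ∈ S → a + b ∈ S) ∧
    (∀ ⦃a : G⦄, a ∈ S → -a ∈ S) ∧
    ∀ ⦃a b c : G⦄, a ∈ S → b ∈ S → c ∈ S → gyr a b c ∈ S

/-- The subgyrogroup generated by `A`. -/
def gen [Gyrogroup G] (A : Set G) : Set G := ⋂₀ {S : Set G | IsSubgyro S ∧ A ⊆ S}

/-- `N` is a normal subgyrogroup: the kernel of a gyrogroup homomorphism. -/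
def IsNormalSubgyro [Gyrogroup G] (N : Set G) : Prop :=
  ∃ (H : Type u) (i : Gyrogroup H) (f : G → H),
    (∀ a b : G, f (a + b) = i.add (f a) (f b)) ∧ N = f ⁻¹' {i.zero}

/-- A (Hausdorff) topological gyrogroup. -/
class TopGyrogroup (G : Type u) [Gyrogroup G] [TopologicalSpace G] : Prop where
  t2 : T2Space G
  continuous_add : Continuous fun p : G × G => p.1 + p.2
  continuous_neg : Continuous fun x : G => -x

/-- `μ` is a neighborhood base at `0` consisting of gyr-invariant sets. -/
def IsGyroNhdBase [Gyrogroup G] [TopologicalSpace G] (μ : Set (Set G)) : Prop :=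
  (∀ U ∈ μ, U ∈ nhds (0 : G)) ∧ (∀ W ∈ nhds (0 : G), ∃ U ∈ μ, U ⊆ W) ∧
    ∀ U ∈ μ, ∀ x y : G, gyr x y '' U = U

/-- A strongly topological gyrogroup: some neighborhood base at `0` is gyr-invariant. -/
def StronglyTop (G : Type u) [Gyrogroup G] [TopologicalSpace G] : Prop :=
  ∃ μ : Set (Set G), IsGyroNhdBase μ

/-- `S` is a suitable set for `G`. -/
def IsSuitable [Gyrogroup G] [TopologicalSpace G] (S : Set G) : Prop :=
  DiscreteTopology S ∧ IsClosed (S ∪ {(0 : G)}) ∧ Dense (gen S)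

end Gyrogroup

open Gyrogroup

section AuxGyro

variable {G : Type u} [Gyrogroup G]

private lemma gyro_zadd (x : G) : (0 : G) + x = x := Gyrogroup.zero_add x
private lemma gyro_nadd (x : G) : -x + x = 0 := Gyrogroup.neg_add x
private lemma gyro_addn (x : G) : x + -x = 0 := Gyrogroup.add_neg x
private lemma gyro_la (x y z : G) : x + (y + z) = (x + y) + gyr x y z :=
  Gyrogroup.left_assoc x y z

private lemma gyro_neg_add_add (a b : G) : -a + (a + b) = gyr (-a) a b := by
  rw [gyro_la, gyro_nadd, gyro_zadd]

private lemma gyro_left_cancel {a b c : G} (h : a + b = a + c) : b = c :=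
  (Gyrogroup.gyr_bij (-a) a).1
    (by rw [← gyro_neg_add_add, ← gyro_neg_add_add, h])

private lemma gyro_neg_neg (a : G) : -(-a) = a :=
  gyro_left_cancel (a := -a) (by rw [gyro_addn, gyro_nadd])

private lemma gyro_gyr_zero (y z : G) : gyr (0 : G) y z = z := by
  have h := gyro_la (0 : G) y z
  rw [gyro_zadd, gyro_zadd] at h
  exact (gyro_left_cancel (a := y) h).symm

private lemma gyro_gyr_neg_self (y z : G) : gyr (-y) y z = z := by
  have h := Gyrogroup.loop (-y) y
  have e : Gyrogroup.add (-y) y = (0 : G) := gyro_nadd y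
  rw [e] at h
  rw [← h]
  exact gyro_gyr_zero y z

private lemma gyro_add_neg_add (a b : G) : a + (-a + b) = b := by
  have h := gyro_la a (-a) b
  rw [gyro_addn, gyro_zadd] at h
  rw [h]
  have h2 := gyro_gyr_neg_self (-a) b
  rwa [gyro_neg_neg] at h2

end AuxGyro

theorem locallyCompact_subgyro_isClosed {G : Type u} [Gyrogroup G] [TopologicalSpace G]
    [TopGyrogroup G] (H : Set G) (hH : IsSubgyro H)
    (hlc : LocallyCompactSpace H) : IsClosed H := by
  obtain ⟨h0, hadd, hneg, -⟩ := hH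
  haveI : T2Space G := TopGyrogroup.t2
  have cont_add : Continuous fun p : G × G => p.1 + p.2 := TopGyrogroup.continuous_add
  have cont_neg : Continuous fun x : G => -x := TopGyrogroup.continuous_neg
  -- compact neighborhood of 0 in the subspace H
  obtain ⟨K, hKn, -, hKc⟩ :=
    hlc.local_compact_nhds (⟨0, h0⟩ : H) Set.univ Filter.univ_mem
  set C : Set G := Subtype.val '' K with hC
  have hCsub : C ⊆ H := by rintro _ ⟨⟨g, hg⟩, -, rfl⟩; exact hg
  have hCc : IsCompact C := hKc.image continuous_subtype_val
  have hCclosed : IsClosed C := hCc.isClosed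
  obtain ⟨U, hU, hUK⟩ := (mem_nhds_subtype H ⟨0, h0⟩ K).mp hKn
  set V : Set G := interior U with hV
  have hVopen : IsOpen V := isOpen_interior
  have h0V : (0 : G) ∈ V := mem_interior_iff_mem_nhds.mpr hU
  have hVH : V ∩ H ⊆ C := by
    rintro g ⟨hgV, hgH⟩
    exact ⟨⟨g, hgH⟩, hUK (show g ∈ U from interior_subset hgV), rfl⟩
  -- closure of V ∩ H is inside H
  have hclVH : closure (V ∩ H) ⊆ H :=
    (closure_minimal hVH hCclosed).trans hCsub
  -- main argument
  rw [← closure_subset_iff_isClosed]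
  intro x hx
  have cont_f : Continuous fun y : G => -y + x := by
    have : Continuous fun y : G => ((-y, x) : G × G) :=
      cont_neg.prodMk continuous_const
    exact cont_add.comp this
  have hfx : (fun y : G => -y + x) x ∈ V := by
    simpa [gyro_nadd] using h0V
  have hnx : (fun y : G => -y + x) ⁻¹' V ∈ nhds x :=
    cont_f.continuousAt.preimage_mem_nhds (hVopen.mem_nhds hfx)
  obtain ⟨h, hhV, hhH⟩ := mem_closure_iff_nhds.mp hx _ hnx
  -- z := -h + x lies in closure H
  have hzH : -h + x ∈ closure H := by
    have cont_g : Continuous fun y : G => -h + y := by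
      have : Continuous fun y : G => ((-h, y) : G × G) :=
        continuous_const.prodMk continuous_id
      exact cont_add.comp this
    exact map_mem_closure cont_g hx fun a ha => hadd (hneg hhH) ha
  have hzV : -h + x ∈ V := hhV
  have hz : -h + x ∈ closure (V ∩ H) := by
    rw [mem_closure_iff_nhds]
    intro t ht
    obtain ⟨w, hw1, hw2⟩ :=
      mem_closure_iff_nhds.mp hzH (t ∩ V) (Filter.inter_mem ht (hVopen.mem_nhds hzV))
    exact ⟨w, hw1.1, hw1.2, hw2⟩
  have hzeH : -h + x ∈ H := hclVH hz
  have : h + (-h + x) ∈ H := hadd hhH hzeH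
  rwa [gyro_add_neg_add] at this
end

section
/- Every compactly generated metrizable topological gyrogroup has a suitable set. -/
/-!
Put `C₀ = K` and cover it by finitely many small closed neighbourhoods of points `s ∈ F₀ ⊆ C₀`;
the translates `-s + x` of the points of these neighbourhoods form a compact set `C₁` close to
`0`. Iterating gives finite sets `Fₙ ⊆ Cₙ` with `Cₙ → 0`, so `⋃ Fₙ \ {0}` is discrete and
accumulates only at `0`. Since `x = s + (-s + x)`, every `x ∈ K` is `φ u` with `u ∈ Cₙ` and `φ`
one of the finitely many composites of left translations by letters from `F₀, …, Fₙ₋₁`.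
The metric need not be invariant under left translations, but these finitely many `φ` are
continuous, so the neighbourhoods at stage `n` can be taken so small that each `φ` varies by less
than `1 / (n + 1)` on each of them: then `φ s`, an element of the generated subgyrogroup, is that
close to `x`.
The closure of the generated subgyrogroup is a subgyrogroup containing `K`, hence everything.
-/

universe u

open Gyrogroup

open Set Filter Topology Metric

section NullSet

variable {X : Type*} [TopologicalSpace X] [T2Space X] {S : Set X} {a : X}

theorem isClosed_insert_of_finite_diff (h : ∀ U ∈ 𝓝 a, (S \ U).Finite) :
    IsClosed (insert a S) := by
  have hlim : Tendsto ((↑) : S → X) cofinite (𝓝 a) := fun U hU =>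
    mem_cofinite.2 <| ((h U hU).preimage Subtype.val_injective.injOn).subset fun x hx => ⟨x.2, hx⟩
  simpa using hlim.isCompact_insert_range_of_cofinite.isClosed

theorem discreteTopology_of_finite_diff (ha : a ∉ S) (h : ∀ U ∈ 𝓝 a, (S \ U).Finite) :
    DiscreteTopology S := by
  refine discreteTopology_subtype_iff'.2 fun s hs => ⟨(insert a (S \ {s}))ᶜ, ?_, ?_⟩
  · exact (isClosed_insert_of_finite_diff fun U hU =>
      (h U hU).subset (sdiff_subset_sdiff_left sdiff_subset)).isOpen_compl
  · ext x
    by_cases hxs : x = s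
    · subst hxs; simp [hs, ne_of_mem_of_not_mem hs ha]
    · simp [hxs]

end NullSet

namespace Gyrogroup

section Algebra

variable {G : Type u} [Gyrogroup G]

theorem zero_add' (x : G) : 0 + x = x := Gyrogroup.zero_add x

theorem neg_add' (x : G) : -x + x = 0 := Gyrogroup.neg_add x

theorem add_neg' (x : G) : x + -x = 0 := Gyrogroup.add_neg x

theorem left_assoc' (x y z : G) : x + (y + z) = x + y + gyr x y z := Gyrogroup.left_assoc x y z

theorem loop' (x y : G) : gyr (x + y) y = gyr x y := Gyrogroup.loop x y

theorem neg_add_add_eq_gyr (a x : G) : -a + (a + x) = gyr (-a) a x := by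
  rw [left_assoc', neg_add', zero_add']

theorem add_left_injective' (a : G) : Function.Injective (a + ·) := fun x y h =>
  (gyr_bij (-a) a).1 (by simpa only [neg_add_add_eq_gyr] using congrArg (-a + ·) h)

theorem gyr_zero_left (a z : G) : gyr 0 a z = z :=
  add_left_injective' a (by simpa only [zero_add'] using (left_assoc' 0 a z).symm)

theorem neg_add_cancel_left' (a x : G) : -a + (a + x) = x := by
  rw [neg_add_add_eq_gyr, ← loop', neg_add', gyr_zero_left]

theorem add_neg_cancel_left' (a x : G) : a + (-a + x) = x := by
  rw [left_assoc', add_neg', zero_add', ← loop', add_neg', gyr_zero_left]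

theorem gyr_eq_neg_add (a b c : G) : gyr a b c = -(a + b) + (a + (b + c)) := by
  rw [left_assoc' a b c, neg_add_cancel_left']

theorem IsSubgyro.sInter {𝒮 : Set (Set G)} (h : ∀ S ∈ 𝒮, IsSubgyro S) : IsSubgyro (⋂₀ 𝒮) :=
  ⟨fun S hS => (h S hS).1, fun _ _ ha hb S hS => (h S hS).2.1 (ha S hS) (hb S hS),
    fun _ ha S hS => (h S hS).2.2.1 (ha S hS),
    fun _ _ _ ha hb hc S hS => (h S hS).2.2.2 (ha S hS) (hb S hS) (hc S hS)⟩

theorem isSubgyro_gen (A : Set G) : IsSubgyro (gen A) :=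
  IsSubgyro.sInter fun _ hS => hS.1

theorem zero_mem_gen (A : Set G) : (0 : G) ∈ gen A := (isSubgyro_gen A).1

theorem subset_gen (A : Set G) : A ⊆ gen A := fun _ hx _ hS => hS.2 hx

theorem gen_subset {A S : Set G} (hS : IsSubgyro S) (hA : A ⊆ S) : gen A ⊆ S :=
  fun _ hx => hx S ⟨hS, hA⟩

theorem gen_diff_zero (A : Set G) : gen (A \ {0}) = gen A := by
  refine (gen_subset (isSubgyro_gen A) (sdiff_subset.trans (subset_gen A))).antisymm
    (gen_subset (isSubgyro_gen _) fun x hx => ?_)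
  by_cases hx0 : x = 0
  · rw [hx0]; exact zero_mem_gen _
  · exact subset_gen _ ⟨hx, hx0⟩

end Algebra

section Topology

variable {G : Type u} [Gyrogroup G] [TopologicalSpace G] [TopGyrogroup G]

theorem TopGyrogroup.continuous_add_left (a : G) : Continuous (a + ·) :=
  TopGyrogroup.continuous_add.comp (continuous_const.prodMk continuous_id)

theorem IsSubgyro.topologicalClosure {H : Set G} (hH : IsSubgyro H) : IsSubgyro (closure H) := by
  have add_mem {a b : G} (ha : a ∈ closure H) (hb : b ∈ closure H) : a + b ∈ closure H :=
    map_mem_closure₂ TopGyrogroup.continuous_add ha hb fun _ hx _ hy => hH.2.1 hx hy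
  have neg_mem {a : G} (ha : a ∈ closure H) : -a ∈ closure H :=
    map_mem_closure TopGyrogroup.continuous_neg ha fun _ hx => hH.2.2.1 hx
  refine ⟨subset_closure hH.1, fun _ _ => add_mem, fun _ => neg_mem, fun a b c ha hb hc => ?_⟩
  rw [gyr_eq_neg_add]
  exact add_mem (neg_mem (add_mem ha hb)) (add_mem ha (add_mem hb hc))

end Topology

section Metric

variable {G : Type u} [Gyrogroup G] [MetricSpace G]

theorem exists_finite_translate_cover [TopGyrogroup G] {C : Set G} (hC : IsCompact C)
    {W : Set (G → G)} (hW : W.Finite) (hWc : ∀ φ ∈ W, Continuous φ) {ε : ℝ} (hε : 0 < ε) :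
    ∃ F ⊆ C, F.Finite ∧ ∃ C' : Set G, IsCompact C' ∧ C' ⊆ ball 0 ε ∧
      ∀ x ∈ C, ∃ s ∈ F, -s + x ∈ C' ∧ ∀ φ ∈ W, dist (φ x) (φ s) < ε := by
  set N : G → Set G := fun c => (-c + ·) ⁻¹' ball 0 ε ∩ ⋂ φ ∈ W, φ ⁻¹' ball (φ c) ε
  have hN (c : G) : N c ∈ 𝓝 c := by
    refine inter_mem ?_ ((biInter_mem hW).2 fun φ hφ =>
      (hWc φ hφ).continuousAt.preimage_mem_nhds (ball_mem_nhds _ hε))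
    refine (TopGyrogroup.continuous_add_left (-c)).continuousAt.preimage_mem_nhds ?_
    rw [neg_add']
    exact ball_mem_nhds 0 hε
  choose V hV hVclosed hVN using fun c => exists_mem_nhds_isClosed_subset (hN c)
  obtain ⟨t, htC, hcov⟩ := hC.elim_nhds_subcover V fun c _ => hV c
  refine ⟨t, htC, t.finite_toSet, ⋃ c ∈ t, (-c + ·) '' (C ∩ V c), ?_, ?_, fun x hx => ?_⟩
  · exact t.finite_toSet.isCompact_biUnion fun c _ =>
      (hC.inter_right (hVclosed c)).image (TopGyrogroup.continuous_add_left _)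
  · simp only [iUnion_subset_iff, image_subset_iff]
    exact fun c _ x hx => (hVN c hx.2).1
  · obtain ⟨c, hct, hxc⟩ := mem_iUnion₂.1 (hcov hx)
    exact ⟨c, hct, mem_iUnion₂.2 ⟨c, hct, mem_image_of_mem _ ⟨hx, hxc⟩⟩,
      fun φ hφ => mem_iInter₂.1 (hVN c hxc).2 φ hφ⟩

structure CoverTower (K : Set G) where
  C : ℕ → Set G
  W : ℕ → Set (G → G)
  F : ℕ → Set G
  C_zero : C 0 = K
  W_zero : W 0 = {id}
  F_subset : ∀ n, F n ⊆ C n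
  F_finite : ∀ n, (F n).Finite
  C_succ_subset : ∀ n : ℕ, C (n + 1) ⊆ ball 0 (1 / (n + 1))
  W_succ : ∀ n, W (n + 1) = image2 (fun φ s => φ ∘ (s + ·)) (W n) (F n)
  exists_translate : ∀ n : ℕ, ∀ x ∈ C n, ∃ s ∈ F n,
    -s + x ∈ C (n + 1) ∧ ∀ φ ∈ W n, dist (φ x) (φ s) < 1 / (n + 1)

namespace CoverTower

theorem nonempty [TopGyrogroup G] {K : Set G} (hK : IsCompact K) : Nonempty (CoverTower K) := by
  have step (n : ℕ) (p : Set G × Set (G → G))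
      (hp : IsCompact p.1 ∧ p.2.Finite ∧ ∀ φ ∈ p.2, Continuous φ) :
      ∃ F C' : Set G, F ⊆ p.1 ∧ F.Finite ∧ IsCompact C' ∧ C' ⊆ ball 0 (1 / (n + 1)) ∧
        ∀ x ∈ p.1, ∃ s ∈ F, -s + x ∈ C' ∧ ∀ φ ∈ p.2, dist (φ x) (φ s) < 1 / (n + 1) := by
    obtain ⟨F, hFC, hF, C', hC'⟩ :=
      exists_finite_translate_cover hp.1 hp.2.1 hp.2.2 Nat.one_div_pos_of_nat
    exact ⟨F, C', hFC, hF, hC'⟩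
  choose! F C' hFC hF hC' hC'ball hcov using step
  let stage (n : ℕ) : Set G × Set (G → G) := Nat.rec (K, {id})
    (fun n p => (C' n p, image2 (fun φ s => φ ∘ (s + ·)) p.2 (F n p))) n
  have hstage (n : ℕ) : IsCompact (stage n).1 ∧ (stage n).2.Finite ∧
      ∀ φ ∈ (stage n).2, Continuous φ := by
    induction n with
    | zero => exact ⟨hK, finite_singleton _, fun φ hφ => mem_singleton_iff.1 hφ ▸ continuous_id⟩
    | succ n ih =>
      refine ⟨hC' n _ ih, ih.2.1.image2 _ (hF n _ ih), ?_⟩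
      rintro _ ⟨φ, hφ, s, -, rfl⟩
      exact (ih.2.2 φ hφ).comp (TopGyrogroup.continuous_add_left s)
  exact ⟨{ C := fun n => (stage n).1
           W := fun n => (stage n).2
           F := fun n => F n (stage n)
           C_zero := rfl
           W_zero := rfl
           F_subset := fun n => hFC n _ (hstage n)
           F_finite := fun n => hF n _ (hstage n)
           C_succ_subset := fun n => hC'ball n _ (hstage n)
           W_succ := fun n => rfl
           exists_translate := fun n => hcov n _ (hstage n) }⟩

variable {K : Set G} (τ : CoverTower K)

theorem finite_iUnion_F_diff {U : Set G} (hU : U ∈ 𝓝 0) : ((⋃ n, τ.F n) \ U).Finite := by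
  obtain ⟨r, hr, hrU⟩ := Metric.mem_nhds_iff.1 hU
  obtain ⟨N, hN⟩ := exists_nat_one_div_lt hr
  refine ((finite_le_nat N).biUnion fun n _ => τ.F_finite n).subset ?_
  rintro x ⟨hx, hxU⟩
  obtain ⟨n, hn⟩ := mem_iUnion.1 hx
  refine mem_iUnion₂.2 ⟨n, Nat.le_of_not_lt fun hNn => ?_, hn⟩
  obtain ⟨k, rfl⟩ := Nat.exists_eq_add_of_lt hNn
  refine hxU (hrU ?_)
  have hdist := mem_ball.1 (τ.C_succ_subset _ (τ.F_subset _ hn))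
  exact mem_ball.2 (hdist.trans_le ((Nat.one_div_le_one_div (Nat.le_add_right N k)).trans hN.le))

theorem mapsTo_gen : ∀ n, ∀ φ ∈ τ.W n, MapsTo φ (gen (⋃ n, τ.F n)) (gen (⋃ n, τ.F n))
  | 0, φ, hφ => by
    rw [τ.W_zero, mem_singleton_iff] at hφ
    exact hφ ▸ mapsTo_id _
  | n + 1, _, hφ => by
    rw [τ.W_succ] at hφ
    obtain ⟨φ, hφ, s, hs, rfl⟩ := hφ
    exact (mapsTo_gen n φ hφ).comp fun x hx =>
      (isSubgyro_gen _).2.1 (subset_gen _ (mem_iUnion_of_mem n hs)) hx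

theorem subset_biUnion_image : ∀ n, K ⊆ ⋃ φ ∈ τ.W n, φ '' τ.C n
  | 0 => by simp [τ.C_zero, τ.W_zero]
  | n + 1 => fun x hx => by
    obtain ⟨φ, hφ, u, hu, rfl⟩ := mem_iUnion₂.1 (subset_biUnion_image n hx)
    obtain ⟨s, hs, hsu, -⟩ := τ.exists_translate n u hu
    refine mem_iUnion₂.2 ⟨φ ∘ (s + ·), τ.W_succ n ▸ mem_image2_of_mem hφ hs, -s + u, hsu, ?_⟩
    simp only [Function.comp_apply, add_neg_cancel_left']

theorem subset_closure_gen : K ⊆ closure (gen (⋃ n, τ.F n)) := by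
  intro x hx
  refine Metric.mem_closure_iff.2 fun ε hε => ?_
  obtain ⟨n, hn⟩ := exists_nat_one_div_lt hε
  obtain ⟨φ, hφ, u, hu, rfl⟩ := mem_iUnion₂.1 (τ.subset_biUnion_image n hx)
  obtain ⟨s, hs, -, hdist⟩ := τ.exists_translate n u hu
  exact ⟨φ s, τ.mapsTo_gen n φ hφ (subset_gen _ (mem_iUnion_of_mem n hs)),
    (hdist φ hφ).trans hn⟩

end CoverTower

end Metric

end Gyrogroup

theorem compactlyGenerated_metrizable_suitable {G : Type u} [Gyrogroup G]
    [TopologicalSpace G] [TopGyrogroup G] [TopologicalSpace.MetrizableSpace G]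
    (hcg : ∃ K : Set G, IsCompact K ∧ gen K = Set.univ) :
    ∃ S : Set G, IsSuitable S := by
  obtain ⟨K, hK, hKgen⟩ := hcg
  let : MetricSpace G := TopologicalSpace.metrizableSpaceMetric G
  obtain ⟨τ⟩ := CoverTower.nonempty hK
  set S := (⋃ n, τ.F n) \ {0}
  have hS (U : Set G) (hU : U ∈ 𝓝 0) : (S \ U).Finite :=
    (τ.finite_iUnion_F_diff hU).subset (sdiff_subset_sdiff_left sdiff_subset)
  have hKS : K ⊆ closure (gen S) := gen_diff_zero (⋃ n, τ.F n) ▸ τ.subset_closure_gen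
  refine ⟨S, discreteTopology_of_finite_diff (fun h => h.2 rfl) hS,
    union_singleton ▸ isClosed_insert_of_finite_diff hS, ?_⟩
  exact dense_iff_closure_eq.2 <| eq_univ_of_univ_subset <|
    hKgen ▸ gen_subset (isSubgyro_gen S).topologicalClosure hKS
end
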